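/- arXiv:2401.02776 — 3 statements merged into one kernel-verified Lean document; each statement's English description precedes it below -/
import Mathlib

section
/- Let (M,d) be a compact metric space, (K_n) a sequence of compact subsets converging to a compact set K in the Hausdorff metric, and (μ_n) a sequence of Borel probability measures on M converging weakly-* to μ. Then μ(K) ≥ limsup_{n→∞} μ_n(K_n). -/
open Filter Metric MeasureTheory

/-- If compact sets `K n` converge to a compact set `L` in the Hausdorff metric and
probability measures `μ n` converge weakly-* to `ν`, then `ν L ≥ limsup (μ n) (K n)`. -/
theorem limsup_measure_le_of_hausdorff_weak {M : Type*} [MetricSpace M] [CompactSpace M]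
    [MeasurableSpace M] [BorelSpace M]
    (K : ℕ → Set M) (L : Set M) (hK : ∀ n, IsCompact (K n)) (hL : IsCompact L)
    (hLne : L.Nonempty)
    (hconv : Filter.Tendsto (fun n => Metric.hausdorffDist (K n) L) Filter.atTop (nhds 0))
    (μ : ℕ → MeasureTheory.ProbabilityMeasure M) (ν : MeasureTheory.ProbabilityMeasure M)
    (hμν : Filter.Tendsto μ Filter.atTop (nhds ν)) :
    Filter.limsup (fun n => (μ n : MeasureTheory.Measure M) (K n)) Filter.atTop
      ≤ (ν : MeasureTheory.Measure M) L := by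
  have key : ∀ δ : ℝ, 0 < δ →
      Filter.limsup (fun n => (μ n : Measure M) (K n)) Filter.atTop
        ≤ (ν : Measure M) (cthickening δ L) := by
    intro δ hδ
    have h1 : ∀ᶠ n in atTop, (μ n : Measure M) (K n) ≤ (μ n : Measure M) (cthickening δ L) := by
      filter_upwards [hconv.eventually (gt_mem_nhds hδ)] with n hn
      apply measure_mono
      rcases (K n).eq_empty_or_nonempty with h | h
      · simp [h]
      intro x hx
      have fin : EMetric.hausdorffEdist (K n) L ≠ ⊤ :=
        hausdorffEdist_ne_top_of_nonempty_of_bounded h hLne (hK n).isBounded hL.isBounded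
      have h2 : infDist x L ≤ δ := (infDist_le_hausdorffDist_of_mem hx fin).trans hn.le
      rw [mem_cthickening_iff]
      rw [← ENNReal.ofReal_toReal (Metric.infEdist_ne_top hLne)]
      exact ENNReal.ofReal_le_ofReal h2
    calc Filter.limsup (fun n => (μ n : Measure M) (K n)) Filter.atTop
        ≤ Filter.limsup (fun n => (μ n : Measure M) (cthickening δ L)) Filter.atTop :=
          limsup_le_limsup h1
      _ ≤ (ν : Measure M) (cthickening δ L) :=
          ProbabilityMeasure.limsup_measure_closed_le_of_tendsto hμν (isClosed_cthickening)
  have htend : Tendsto (fun δ : ℝ => (ν : Measure M) (cthickening δ L)) (nhdsWithin 0 (Set.Ioi 0))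
      (nhds ((ν : Measure M) L)) := by
    apply Tendsto.mono_left _ nhdsWithin_le_nhds
    exact tendsto_measure_cthickening_of_isClosed
      ⟨1, one_pos, measure_ne_top _ _⟩ hL.isClosed
  refine ge_of_tendsto htend ?_
  filter_upwards [self_mem_nhdsWithin] with δ hδ using key δ hδ
end

section
/- Let f be a C^{1+} partially hyperbolic diffeomorphism of a compact manifold with splitting TM = E^u ⊕ E^c ⊕ E^s, dim E^c = 1. Assume the Ledrappier–Young inequalities: for every ergodic invariant measure μ, h_μ(f) ≤ h^u_μ(f) + max(λ_c(f,μ), 0), and h_μ(f) = h^u_μ(f) whenever λ_c(f,μ) ≤ 0 (and the symmetric statements for f⁻¹). If h^u(f) > h^s(f) and μ is an ergodic measure with h_μ(f) > h^s(f), then the central Lyapunov exponent satisfies λ_c(f,μ) ≤ h^s(f) − h_μ(f) < 0. -/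
/-- If `h^u(f) > h^s(f)` and `μ` is ergodic with `h_μ(f) > h^s(f)`, then
`λ_c(f,μ) ≤ h^s(f) − h_μ(f) < 0`.  Here the ergodic measures are abstracted as a type `E`,
with entropy `h`, unstable/stable metric entropies `hu_m`, `hs_m`, central Lyapunov
exponent `lam`, and unstable/stable topological entropies `hu`, `hs`, subject to the
Ledrappier–Young inequalities and the variational principles. -/
theorem central_exponent_neg_of_large_entropy
    {E : Type*} (h hu_m hs_m lam : E → ℝ) (hu hs : ℝ)
    (hLYu : ∀ μ, h μ ≤ hu_m μ + max (lam μ) 0)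
    (hLYu_eq : ∀ μ, lam μ ≤ 0 → h μ = hu_m μ)
    (hLYs : ∀ μ, h μ ≤ hs_m μ + max (-(lam μ)) 0)
    (hLYs_eq : ∀ μ, 0 ≤ lam μ → h μ = hs_m μ)
    (hvaru : ∀ μ, hu_m μ ≤ hu) (hvars : ∀ μ, hs_m μ ≤ hs)
    (hus : hs < hu) (μ : E) (hμ : hs < h μ) :
    lam μ ≤ hs - h μ ∧ hs - h μ < 0 := by
  have hneg : lam μ < 0 := by
    by_contra hc
    push_neg at hc
    have := hLYs_eq μ hc
    have := hvars μ
    linarith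
  have hmax : max (-(lam μ)) 0 = -(lam μ) := max_eq_left (by linarith)
  have := hLYs μ
  rw [hmax] at this
  have := hvars μ
  constructor <;> linarith
end

section
/- Let f : M → M be a C¹ diffeomorphism of a compact manifold with a continuous Df-invariant one-dimensional line bundle E^c, and let μ be an ergodic f-invariant probability measure with central Lyapunov exponent λ_c(f,μ) = ∫ log‖Df|_{E^c}‖ dμ < 0. Set m(f) = min_{x∈M} log‖Df(x)|_{E^c}‖. Then for every ρ with e^{λ_c(f,μ)} < ρ < 1, the set Λ_ρ(f) = { x : ‖Df^n(x)|_{E^c}‖ ≤ ρ^n for all n ≥ 1 } satisfies μ(Λ_ρ(f)) ≥ (log ρ − λ_c(f,μ)) / (log ρ − m(f)) > 0. -/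
/-!
Write `b i = log c (fⁱ x) - log ρ ≥ m(f) - log ρ`. Call `n < N` a Pliss time of the orbit if all
sums `b n + ⋯ + b (k - 1)`, `n < k ≤ N`, are `≤ 0`. Peeling off one time at a time from the
right, the Pliss times number at least
`(N log ρ - ∑_{i<N} log c (fⁱ x)) / (log ρ - m(f))`. A Pliss time
`n ≤ N - N'` puts `fⁿ x` into the finite-horizon set `Λ_ρ^{N'}`, so the number of visits of the
orbit to `Λ_ρ^{N'}` before time `N` is at least that count minus `N'`. Integrating this pointwise
inequality against the invariant measure (in place of Birkhoff's theorem) gives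
`N (log ρ - λ_c) ≤ (log ρ - m(f)) (N μ(Λ_ρ^{N'}) + N')`; let `N → ∞`, then `N' → ∞`.
-/

open Finset MeasureTheory

noncomputable def plissTimes (b : ℕ → ℝ) (N : ℕ) : Finset ℕ :=
  {m ∈ range N | ∀ k ∈ Ioc m N, ∑ i ∈ Ico m k, b i ≤ 0}

theorem sum_ite_mem_plissTimes_le {b : ℕ → ℝ} {β : ℝ} (hb : ∀ i, β ≤ b i) {n N : ℕ}
    (hn : n ≤ N) :
    ∀ k ∈ Icc n N, ∑ m ∈ Ico n N, (if m ∈ plissTimes b N then β else 0) ≤ ∑ i ∈ Ico k N, b i := by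
  induction hn using Nat.decreasingInduction with
  | self =>
    intro k hk
    obtain rfl : k = N := le_antisymm (mem_Icc.1 hk).2 (mem_Icc.1 hk).1
    simp
  | of_succ n hn ih =>
    intro k hk
    obtain ⟨hnk, hkN⟩ := mem_Icc.1 hk
    rw [sum_eq_sum_Ico_succ_bot hn]
    by_cases hP : n ∈ plissTimes b N
    · have hpliss := (mem_filter.1 hP).2
      rw [if_pos hP]
      calc β + ∑ m ∈ Ico (n + 1) N, (if m ∈ plissTimes b N then β else 0)
          ≤ b n + ∑ i ∈ Ico (n + 1) N, b i := add_le_add (hb n) (ih _ (by simp [hn]))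
        _ = ∑ i ∈ Ico n N, b i := (sum_eq_sum_Ico_succ_bot hn b).symm
        _ ≤ ∑ i ∈ Ico k N, b i := by
          rcases hnk.eq_or_lt with rfl | hnk
          · rfl
          · rw [← sum_Ico_consecutive b hnk.le hkN]
            linarith [hpliss k (mem_Ioc.2 ⟨hnk, hkN⟩)]
    · rw [if_neg hP, zero_add]
      -- a later time `k'` with a larger partial sum absorbs the case `k = n`
      rcases hnk.eq_or_lt with rfl | hnk
      · obtain ⟨k', hk', hpos⟩ : ∃ k' ∈ Ioc n N, 0 < ∑ i ∈ Ico n k', b i := by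
          simpa [plissTimes, hn, and_assoc] using hP
        obtain ⟨hkk', hk'N⟩ := mem_Ioc.1 hk'
        calc _ ≤ ∑ i ∈ Ico k' N, b i := ih k' (mem_Icc.2 ⟨hkk', hk'N⟩)
          _ ≤ ∑ i ∈ Ico n N, b i := by
            rw [← sum_Ico_consecutive b hkk'.le hk'N]
            linarith
      · exact ih k (mem_Icc.2 ⟨hnk, hkN⟩)

/-- The Pliss lemma, in counting form. -/
theorem card_plissTimes_mul_le_sum {b : ℕ → ℝ} {β : ℝ} (hb : ∀ i, β ≤ b i) (N : ℕ) :
    #(plissTimes b N) * β ≤ ∑ i ∈ range N, b i := by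
  have h := sum_ite_mem_plissTimes_le hb N.zero_le 0 (by simp)
  have hsub : plissTimes b N ⊆ range N := filter_subset _ _
  rwa [← range_eq_Ico, sum_ite_mem, inter_eq_right.2 hsub, sum_const, nsmul_eq_mul] at h

theorem birkhoffSum_iterate_eq_sum_Ico {α M : Type*} [AddCommMonoid M] (f : α → α) (g : α → M)
    (m n : ℕ) (x : α) :
    birkhoffSum f g n (f^[m] x) = ∑ i ∈ Ico m (m + n), g (f^[i] x) := by
  simp [sum_Ico_eq_sum_range, birkhoffSum, add_comm m, Function.iterate_add_apply]

theorem MeasureTheory.MeasurePreserving.integral_birkhoffSum {α E : Type*} [MeasurableSpace α]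
    [NormedAddCommGroup E] [NormedSpace ℝ E] {μ : Measure α} {f : α → α}
    (hf : MeasurePreserving f μ μ) {g : α → E} (hg : Integrable g μ) (n : ℕ) :
    ∫ x, birkhoffSum f g n x ∂μ = n • ∫ x, g x ∂μ := by
  have hcomp (k : ℕ) : ∫ x, g (f^[k] x) ∂μ = ∫ x, g x ∂μ := by
    have hk := hf.iterate k
    have hgk : AEStronglyMeasurable g (μ.map f^[k]) := by
      rw [hk.map_eq]; exact hg.aestronglyMeasurable
    rw [← integral_map hk.measurable.aemeasurable hgk, hk.map_eq]
  have hint (k : ℕ) : Integrable (fun x => g (f^[k] x)) μ :=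
    (hf.iterate k).integrable_comp_of_integrable hg
  simp only [birkhoffSum]
  rw [integral_finsetSum _ fun k _ => hint k]
  simp [hcomp]

theorem MeasureTheory.MeasurePreserving.integrable_birkhoffSum {α E : Type*} [MeasurableSpace α]
    [NormedAddCommGroup E] {μ : Measure α} {f : α → α}
    (hf : MeasurePreserving f μ μ) {g : α → E} (hg : Integrable g μ) (n : ℕ) :
    Integrable (birkhoffSum f g n) μ :=
  integrable_finsetSum _ fun k _ => (hf.iterate k).integrable_comp_of_integrable hg

open scoped Classical in
theorem birkhoffSum_indicator_one {α : Type*} (f : α → α) (s : Set α) (n : ℕ) (x : α) :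
    birkhoffSum f (s.indicator (1 : α → ℝ)) n x = #{k ∈ range n | f^[k] x ∈ s} := by
  simp [birkhoffSum, Set.indicator_apply, sum_boole]

theorem le_of_forall_natCast_mul_add_le {K : Type*} [Field K] [LinearOrder K]
    [IsStrictOrderedRing K] [Archimedean K] {a b C : K} (h : ∀ N : ℕ, N * a + C ≤ N * b) :
    a ≤ b := by
  by_contra! hba
  obtain ⟨N, hN⟩ := exists_nat_gt (-C / (a - b))
  rw [div_lt_iff₀ (sub_pos.2 hba)] at hN
  linarith [h N, mul_sub (N : K) a b]

theorem Real.prod_le_pow_iff_birkhoffSum_log_sub_nonpos {α : Type*} {c : α → ℝ}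
    (hc : ∀ x, 0 < c x) {ρ : ℝ} (hρ : 0 < ρ) (f : α → α) (n : ℕ) (x : α) :
    ∏ j ∈ range n, c (f^[j] x) ≤ ρ ^ n ↔
      birkhoffSum f (fun y => Real.log (c y) - Real.log ρ) n x ≤ 0 := by
  rw [← Real.log_le_log_iff (prod_pos fun j _ => hc _) (pow_pos hρ n),
    Real.log_prod fun j _ => (hc _).ne', Real.log_pow, birkhoffSum, sum_sub_distrib, sum_const,
    card_range, nsmul_eq_mul, sub_nonpos]

section PlissEstimate

variable {α : Type*} {f : α → α} {g : α → ℝ} {β : ℝ}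

/-- For `g = log c - log ρ` this is `Λ_ρ` with the condition imposed only up to time `N`. -/
def birkhoffSumNonposUpTo (f : α → α) (g : α → ℝ) (N : ℕ) : Set α :=
  {x | ∀ n ∈ Ioc 0 N, birkhoffSum f g n x ≤ 0}

theorem iterate_mem_birkhoffSumNonposUpTo {x : α} {m N N' : ℕ}
    (hm : m ∈ plissTimes (fun i => g (f^[i] x)) N) (hmN : m + N' ≤ N) :
    f^[m] x ∈ birkhoffSumNonposUpTo f g N' := by
  intro n hn
  obtain ⟨hn0, hnN'⟩ := mem_Ioc.1 hn
  rw [birkhoffSum_iterate_eq_sum_Ico]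
  exact (mem_filter.1 hm).2 _ (mem_Ioc.2 ⟨by omega, by omega⟩)

open scoped Classical in
theorem card_plissTimes_le_card_visits_add (x : α) (N N' : ℕ) :
    #(plissTimes (fun i => g (f^[i] x)) N) ≤
      #{m ∈ range N | f^[m] x ∈ birkhoffSumNonposUpTo f g N'} + N' := by
  calc _ ≤ #({m ∈ range N | f^[m] x ∈ birkhoffSumNonposUpTo f g N'} ∪ Ico (N - N') N) := by
        refine card_le_card fun m hm => ?_
        have hmN := (mem_filter.1 hm).1
        by_cases h : m + N' ≤ N
        · exact mem_union_left _ (mem_filter.2 ⟨hmN, iterate_mem_birkhoffSumNonposUpTo hm h⟩)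
        · exact mem_union_right _ (mem_Ico.2 ⟨by omega, mem_range.1 hmN⟩)
    _ ≤ _ := (card_union_le _ _).trans (by simp; omega)

theorem birkhoffSum_indicator_add_mul_le (hβ0 : β ≤ 0) (hβ : ∀ x, β ≤ g x) (x : α)
    (N N' : ℕ) :
    (birkhoffSum f ((birkhoffSumNonposUpTo f g N').indicator 1) N x + N') * β ≤
      birkhoffSum f g N x := by
  rw [birkhoffSum_indicator_one]
  calc _ ≤ (#(plissTimes (fun i => g (f^[i] x)) N) : ℝ) * β :=
        mul_le_mul_of_nonpos_right (by exact_mod_cast card_plissTimes_le_card_visits_add x N N')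
          hβ0
    _ ≤ _ := card_plissTimes_mul_le_sum (fun i => hβ _) N

variable [MeasurableSpace α]

theorem measurableSet_birkhoffSumNonposUpTo (hf : Measurable f) (hg : Measurable g) (N : ℕ) :
    MeasurableSet (birkhoffSumNonposUpTo f g N) := by
  simp only [birkhoffSumNonposUpTo, Set.ofPred_forall]
  exact .iInter fun n => .iInter fun _ => measurableSet_le
    (Finset.measurable_sum _ fun k _ => hg.comp (hf.iterate k)) measurable_const

variable {μ : Measure α} [IsFiniteMeasure μ]

theorem MeasureTheory.MeasurePreserving.natCast_mul_measureReal_birkhoffSumNonposUpTo_add_le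
    (hf : MeasurePreserving f μ μ) (hg : Measurable g) (hgi : Integrable g μ) (hβ0 : β ≤ 0)
    (hβ : ∀ x, β ≤ g x) (N N' : ℕ) :
    (N * μ.real (birkhoffSumNonposUpTo f g N') + N' * μ.real Set.univ) * β ≤
      N * ∫ x, g x ∂μ := by
  have hs := measurableSet_birkhoffSumNonposUpTo hf.measurable hg N'
  have hind : Integrable ((birkhoffSumNonposUpTo f g N').indicator (1 : α → ℝ)) μ :=
    (integrable_const 1).indicator hs
  have hmono := integral_mono
    (((hf.integrable_birkhoffSum hind N).add (integrable_const (N' : ℝ))).mul_const β)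
    (hf.integrable_birkhoffSum hgi N) (birkhoffSum_indicator_add_mul_le hβ0 hβ · N N')
  rwa [integral_mul_const, integral_add' (hf.integrable_birkhoffSum hind N) (integrable_const _),
    hf.integral_birkhoffSum hind, hf.integral_birkhoffSum hgi, integral_indicator_one hs,
    integral_const, smul_eq_mul, nsmul_eq_mul, nsmul_eq_mul, mul_comm (μ.real _)] at hmono

theorem MeasureTheory.MeasurePreserving.mul_measureReal_birkhoffSumNonposUpTo_le_integral
    (hf : MeasurePreserving f μ μ) (hg : Measurable g) (hgi : Integrable g μ) (hβ0 : β ≤ 0)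
    (hβ : ∀ x, β ≤ g x) (N' : ℕ) :
    β * μ.real (birkhoffSumNonposUpTo f g N') ≤ ∫ x, g x ∂μ :=
  le_of_forall_natCast_mul_add_le (C := N' * μ.real Set.univ * β) fun N => by
    linarith [hf.natCast_mul_measureReal_birkhoffSumNonposUpTo_add_le hg hgi hβ0 hβ N N']

theorem MeasureTheory.MeasurePreserving.mul_measureReal_birkhoffSum_nonpos_le_integral
    (hf : MeasurePreserving f μ μ) (hg : Measurable g) (hgi : Integrable g μ) (hβ0 : β ≤ 0)
    (hβ : ∀ x, β ≤ g x) :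
    β * μ.real {x | ∀ n, 0 < n → birkhoffSum f g n x ≤ 0} ≤ ∫ x, g x ∂μ := by
  have hiInter : {x | ∀ n, 0 < n → birkhoffSum f g n x ≤ 0} =
      ⋂ N, birkhoffSumNonposUpTo f g N := by
    ext x
    simp only [birkhoffSumNonposUpTo, Set.mem_ofPred_eq, Set.mem_iInter, mem_Ioc]
    exact ⟨fun h N n hn => h n hn.1, fun h n hn => h n n ⟨hn, le_rfl⟩⟩
  have hanti : Antitone (birkhoffSumNonposUpTo f g) := fun N N' hNN' x hx n hn =>
    hx n (Ioc_subset_Ioc_right hNN' hn)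
  have hlim := tendsto_measure_iInter_atTop
    (fun N => (measurableSet_birkhoffSumNonposUpTo hf.measurable hg N).nullMeasurableSet) hanti
    ⟨0, measure_ne_top μ _⟩
  rw [hiInter]
  exact le_of_tendsto' (((ENNReal.tendsto_toReal (measure_ne_top _ _)).comp hlim).const_mul β)
    (hf.mul_measureReal_birkhoffSumNonposUpTo_le_integral hg hgi hβ0 hβ)

end PlissEstimate

theorem measure_lambda_rho_lower_bound_general {M : Type*} [MetricSpace M] [CompactSpace M]
    [MeasurableSpace M] [BorelSpace M]
    (f : M → M) (c : M → ℝ) (hc : Continuous c) (hcpos : ∀ x, 0 < c x)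
    (μ : MeasureTheory.Measure M) [MeasureTheory.IsProbabilityMeasure μ]
    (herg : Ergodic f μ)
    (lamc mf : ℝ) (hlamc : lamc = ∫ x, Real.log (c x) ∂μ)
    (hmf : IsLeast (Set.range fun x => Real.log (c x)) mf)
    (ρ : ℝ) (hρ : Real.exp lamc < ρ) :
    0 < (Real.log ρ - lamc) / (Real.log ρ - mf) ∧
    ENNReal.ofReal ((Real.log ρ - lamc) / (Real.log ρ - mf)) ≤
      μ {x : M | ∀ n, 1 ≤ n → ∏ j ∈ Finset.range n, c (f^[j] x) ≤ ρ ^ n} := by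
  have hρ0 : 0 < ρ := (Real.exp_pos lamc).trans hρ
  have hlamc_lt : lamc < Real.log ρ := (Real.lt_log_iff_exp_lt hρ0).2 hρ
  have hlogc : Continuous fun x => Real.log (c x) := hc.log fun x => (hcpos x).ne'
  have hint : Integrable (fun x => Real.log (c x)) μ :=
    hlogc.integrable_of_hasCompactSupport (.of_compactSpace _)
  have hmf_le : mf ≤ lamc := by
    simpa [hlamc] using integral_mono (integrable_const mf) hint fun x => hmf.2 ⟨x, rfl⟩
  have hΛ : {x : M | ∀ n, 1 ≤ n → ∏ j ∈ Finset.range n, c (f^[j] x) ≤ ρ ^ n} =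
      {x | ∀ n, 0 < n → birkhoffSum f (fun y => Real.log (c y) - Real.log ρ) n x ≤ 0} := by
    simp only [Real.prod_le_pow_iff_birkhoffSum_log_sub_nonpos hcpos hρ0, Nat.one_le_iff_ne_zero,
      Nat.pos_iff_ne_zero]
  have key := herg.toMeasurePreserving.mul_measureReal_birkhoffSum_nonpos_le_integral
    (g := fun y => Real.log (c y) - Real.log ρ) (β := mf - Real.log ρ)
    (hlogc.measurable.sub_const _) (hint.sub (integrable_const _)) (by linarith)
    fun x => by linarith [hmf.2 ⟨x, rfl⟩]
  rw [integral_sub hint (integrable_const _), integral_const, probReal_univ, smul_eq_mul, one_mul,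
    ← hlamc, ← hΛ, measureReal_def] at key
  have hgap : 0 < Real.log ρ - mf := by linarith
  refine ⟨div_pos (by linarith) hgap, ?_⟩
  rw [ENNReal.ofReal_le_iff_le_toReal (measure_ne_top _ _), div_le_iff₀ hgap]
  linarith

/-- Pliss-lemma estimate on the measure of `Λ_ρ(f)`: if `μ` is ergodic with negative central
Lyapunov exponent `λ_c = ∫ log c dμ < 0` and `e^{λ_c} < ρ < 1`, then
`μ(Λ_ρ) ≥ (log ρ − λ_c)/(log ρ − m(f)) > 0`, where `m(f) = min_x log c(x)`.
The norm cocycle of `Df|_{E^c}` is abstracted as the continuous positive function `c`. -/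
theorem measure_lambda_rho_lower_bound {M : Type*} [MetricSpace M] [CompactSpace M]
    [MeasurableSpace M] [BorelSpace M]
    (f : M → M) (hf : Continuous f) (c : M → ℝ) (hc : Continuous c) (hcpos : ∀ x, 0 < c x)
    (μ : MeasureTheory.Measure M) [MeasureTheory.IsProbabilityMeasure μ]
    (herg : Ergodic f μ)
    (lamc mf : ℝ) (hlamc : lamc = ∫ x, Real.log (c x) ∂μ) (hneg : lamc < 0)
    (hmf : IsLeast (Set.range fun x => Real.log (c x)) mf)
    (ρ : ℝ) (hρ : Real.exp lamc < ρ) (hρ1 : ρ < 1) :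
    0 < (Real.log ρ - lamc) / (Real.log ρ - mf) ∧
    ENNReal.ofReal ((Real.log ρ - lamc) / (Real.log ρ - mf)) ≤
      μ {x : M | ∀ n, 1 ≤ n → ∏ j ∈ Finset.range n, c (f^[j] x) ≤ ρ ^ n} :=
  measure_lambda_rho_lower_bound_general f c hc hcpos μ herg lamc mf hlamc hmf ρ hρ
end
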